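/- Let S : ℝ² → ℝ² be integrable with compact support. If the compressional and shear far field patterns both vanish identically, i.e. u_p^∞(x̂,ω) = 0 and u_s^∞(x̂,ω) = 0 for all x̂ on the unit circle S¹ and all ω > 0, then S = 0 almost everywhere on ℝ². -/

import Mathlib

/-!
STATEMENT 7: uniqueness for the inverse elastic source problem in ℝ².
If both the compressional and shear far field patterns of an integrable, compactly
supported source `S : ℝ² → ℝ²` vanish for all observation directions on the unit
circle and all frequencies `ω > 0`, then `S = 0` almost everywhere.
-/

open MeasureTheory Real FourierTransform SchwartzMap
open scoped RealInnerProductSpace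

noncomputable section

namespace ElasticUniq2D

abbrev E2 := EuclideanSpace ℝ (Fin 2)

/-- Compressional wavenumber `k_p = ω / √(λ + 2μ)`. -/
def kp (lam mu ω : ℝ) : ℝ := ω / Real.sqrt (lam + 2 * mu)

/-- Shear wavenumber `k_s = ω / √μ`. -/
def ks (mu ω : ℝ) : ℝ := ω / Real.sqrt mu

/-- `x̂^⊥ := (-x̂₂, x̂₁)`. -/
def perp (xhat : E2) : Fin 2 → ℝ := ![-(xhat 1), xhat 0]

/-- Compressional far field pattern
`u_p^∞(x̂,ω) := x̂ ∫ e^{-i k_p x̂·y} (S(y)·x̂) dy`. -/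
def up (lam mu : ℝ) (S : E2 → Fin 2 → ℝ) (xhat : E2) (ω : ℝ) : Fin 2 → ℂ :=
  fun j => ((xhat j : ℝ) : ℂ) *
    ∫ y : E2, Complex.exp (-Complex.I * ((kp lam mu ω : ℝ) : ℂ) *
        ((∑ i, xhat i * y i : ℝ) : ℂ)) * ((∑ i, S y i * xhat i : ℝ) : ℂ)

/-- Shear far field pattern
`u_s^∞(x̂,ω) := x̂^⊥ ∫ e^{-i k_s x̂·y} (S(y)·x̂^⊥) dy`. -/
def us (mu : ℝ) (S : E2 → Fin 2 → ℝ) (xhat : E2) (ω : ℝ) : Fin 2 → ℂ :=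
  fun j => ((perp xhat j : ℝ) : ℂ) *
    ∫ y : E2, Complex.exp (-Complex.I * ((ks mu ω : ℝ) : ℂ) *
        ((∑ i, xhat i * y i : ℝ) : ℂ)) * ((∑ i, S y i * perp xhat i : ℝ) : ℂ)

open scoped ContDiff in
/-- A smooth compactly supported function as a Schwartz map. -/
def toSchwartz (g : E2 → ℂ) (hg : ContDiff ℝ ∞ g) (h : HasCompactSupport g) : 𝓢(E2, ℂ) where
  toFun := g
  smooth' := hg
  decay' := by
    intro k n
    have hcs : HasCompactSupport (fun x => ‖x‖ ^ k * ‖iteratedFDeriv ℝ n g x‖) := by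
      apply HasCompactSupport.mul_left
      exact (h.iteratedFDeriv n).norm
    have hcont : Continuous (fun x : E2 => ‖x‖ ^ k * ‖iteratedFDeriv ℝ n g x‖) :=
      (continuous_norm.pow k).mul (hg.continuous_iteratedFDeriv (mod_cast le_top)).norm
    obtain ⟨C, hC⟩ := (hcont.bddAbove_range_of_hasCompactSupport hcs)
    exact ⟨C, fun x => hC (Set.mem_range_self x)⟩

lemma ae_zero_of_fourier_zero (f : E2 → ℂ) (hf : Integrable f)
    (h : ∀ w : E2, 𝓕 f w = 0) : ∀ᵐ y : E2, f y = 0 := by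
  apply ae_eq_zero_of_integral_contDiff_smul_eq_zero hf.locallyIntegrable
  intro g hg hgsupp
  set G : 𝓢(E2, ℂ) := toSchwartz (fun x => (g x : ℂ))
      (Complex.ofRealCLM.contDiff.comp hg) (hgsupp.comp_left (g := Complex.ofReal) Complex.ofReal_zero) with hG
  set φ : 𝓢(E2, ℂ) := (fourierTransformCLE ℂ 𝓢(E2, ℂ)).symm G with hφdef
  have hφ : 𝓕 ⇑φ = ⇑G := by
    have := (fourierTransformCLE ℂ 𝓢(E2, ℂ)).apply_symm_apply G
    calc 𝓕 ⇑φ = ⇑(fourierTransformCLE ℂ 𝓢(E2, ℂ) φ) := by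
          rfl
      _ = ⇑G := by rw [this]
  have flipL : (innerₗ E2).flip = innerₗ E2 := by
    apply LinearMap.ext; intro x; apply LinearMap.ext; intro y
    simp [real_inner_comm]
  have key := VectorFourier.integral_fourierIntegral_smul_eq_flip
    (e := Real.fourierChar) (L := innerₗ E2) (μ := volume) (ν := volume)
    Real.continuous_fourierChar (by exact continuous_inner) φ.integrable hf
  rw [flipL] at key
  have : (fun x : E2 => g x • f x) = fun x => (VectorFourier.fourierIntegral
      Real.fourierChar volume (innerₗ E2) ⇑φ x) • f x := by
    funext x
    have : (g x : ℂ) = 𝓕 ⇑φ x := by rw [hφ]; rfl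
    rw [Complex.real_smul, this]; rfl
  rw [this, key]
  have : (fun x : E2 => (⇑φ x) • (VectorFourier.fourierIntegral
      Real.fourierChar volume (innerₗ E2) f x)) = fun x : E2 => (0 : ℂ) := by
    funext x
    have : VectorFourier.fourierIntegral Real.fourierChar volume (innerₗ E2) f x = 𝓕 f x := rfl
    rw [this, h x, smul_zero]
  rw [this, integral_zero]

def gc (S : E2 → Fin 2 → ℝ) (j : Fin 2) : E2 → ℂ := fun y => ((S y j : ℝ) : ℂ)

set_option maxHeartbeats 1000000

theorem uniqueness_elastic_source (lam mu : ℝ) (hmu : 0 < mu) (hlm : 0 < 2 * mu + lam)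
    (S : E2 → Fin 2 → ℝ) (hS_int : Integrable S) (hS_supp : HasCompactSupport S)
    (hvanish : ∀ xhat : E2, ‖xhat‖ = 1 → ∀ ω : ℝ, 0 < ω →
      up lam mu S xhat ω = 0 ∧ us mu S xhat ω = 0) :
    ∀ᵐ y : E2, S y = 0 := by
  classical
  have hlm' : (0:ℝ) < lam + 2*mu := by linarith
  have hSj : ∀ j : Fin 2, Integrable (gc S j) := by
    intro j
    have h1 : Integrable (fun y : E2 => S y j) volume :=
      (ContinuousLinearMap.proj (R := ℝ) (φ := fun _ : Fin 2 => ℝ) j).integrable_comp hS_int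
    exact h1.ofReal
  -- Step A
  have stepA : ∀ xhat : E2, ‖xhat‖ = 1 → ∀ k : ℝ, 0 < k →
      (∫ y : E2, Complex.exp (-Complex.I * (k:ℂ) * ((∑ i, xhat i * y i : ℝ) : ℂ)) *
        ((∑ i, S y i * xhat i : ℝ) : ℂ)) = 0 ∧
      (∫ y : E2, Complex.exp (-Complex.I * (k:ℂ) * ((∑ i, xhat i * y i : ℝ) : ℂ)) *
        ((∑ i, S y i * perp xhat i : ℝ) : ℂ)) = 0 := by
    intro xhat hx k hk
    have hxne : xhat ≠ 0 := by
      intro h; rw [h] at hx; simp at hx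
    have hexj : xhat 0 ≠ 0 ∨ xhat 1 ≠ 0 := by
      by_contra hcon
      push_neg at hcon
      apply hxne
      ext i
      fin_cases i <;> simp [hcon.1, hcon.2]
    constructor
    · have hsq : (0:ℝ) < Real.sqrt (lam + 2*mu) := Real.sqrt_pos.2 hlm'
      have hω : 0 < k * Real.sqrt (lam + 2*mu) := mul_pos hk hsq
      have h1 := (hvanish xhat hx _ hω).1
      have hkp : kp lam mu (k * Real.sqrt (lam + 2*mu)) = k := by
        unfold kp; field_simp
      obtain ⟨j, hj⟩ : ∃ j, xhat j ≠ 0 := hexj.elim (fun h => ⟨0, h⟩) (fun h => ⟨1, h⟩)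
      have h2 := congrFun h1 j
      rw [up] at h2
      simp only [Pi.zero_apply, hkp] at h2
      rcases mul_eq_zero.1 h2 with h | h
      · exact absurd (by exact_mod_cast h : _ = (0:ℝ)) hj
      · exact h
    · have hsq : (0:ℝ) < Real.sqrt mu := Real.sqrt_pos.2 hmu
      have hω : 0 < k * Real.sqrt mu := mul_pos hk hsq
      have h1 := (hvanish xhat hx _ hω).2
      have hks : ks mu (k * Real.sqrt mu) = k := by
        unfold ks; field_simp
      have hperp : ∃ j, perp xhat j ≠ 0 := by
        rcases hexj with h | h
        · exact ⟨1, by simpa [perp] using h⟩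
        · exact ⟨0, by simpa [perp] using h⟩
      obtain ⟨j, hj⟩ := hperp
      have h2 := congrFun h1 j
      rw [us] at h2
      simp only [Pi.zero_apply, hks] at h2
      rcases mul_eq_zero.1 h2 with h | h
      · exact absurd (by exact_mod_cast h : _ = (0:ℝ)) hj
      · exact h
  -- Step B
  have stepB : ∀ w : E2, w ≠ 0 → ∀ j : Fin 2, 𝓕 (gc S j) w = 0 := by
    intro w hw
    set r : ℝ := ‖w‖ with hr
    have hrpos : 0 < r := norm_pos_iff.2 hw
    set xhat : E2 := (r⁻¹ : ℝ) • w with hxh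
    have hxnorm : ‖xhat‖ = 1 := by
      rw [hxh, norm_smul, norm_inv, norm_norm, ← hr]
      field_simp
    set k : ℝ := 2 * π * r with hkdef
    have hkpos : 0 < k := by positivity
    have hFv : ∀ v : Fin 2 → ℝ,
        𝓕 (fun y : E2 => ((∑ i, S y i * v i : ℝ) : ℂ)) w
          = ∫ y : E2, Complex.exp (-Complex.I * (k:ℂ) * ((∑ i, xhat i * y i : ℝ):ℂ)) *
              ((∑ i, S y i * v i : ℝ):ℂ) := by
      intro v
      rw [Real.fourier_eq']
      congr 1
      funext y
      rw [smul_eq_mul]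
      congr 2
      have hinner : ⟪y, w⟫ = ∑ i, y i * w i := by
        simp [PiLp.inner_apply, RCLike.inner_apply, conj_trivial]; ring
      have hxi : ∀ i, xhat i = r⁻¹ * w i := fun i => rfl
      have hexp : (-2 * π * ⟪y, w⟫) = -(k * (∑ i, xhat i * y i)) := by
        rw [hinner, hkdef]
        have : (∑ i, xhat i * y i) = r⁻¹ * ∑ i, y i * w i := by
          rw [Finset.mul_sum]
          exact Finset.sum_congr rfl (fun i _ => by rw [hxi i]; ring)
        rw [this]
        field_simp
      rw [hexp]
      push_cast
      ring
    obtain ⟨e1, e2⟩ := stepA xhat hxnorm k hkpos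
    rw [← hFv (fun i => xhat i)] at e1
    rw [← hFv (perp xhat)] at e2
    -- linearity
    have hbaseInt : ∀ j : Fin 2, Integrable (fun y : E2 =>
        Complex.exp (Complex.ofReal (-2 * π * ⟪y, w⟫) * Complex.I) * gc S j y) := by
      intro j
      apply (hSj j).bdd_mul (c := 1)
      · apply Continuous.aestronglyMeasurable
        exact Complex.continuous_exp.comp
          ((Complex.continuous_ofReal.comp
            (continuous_const.mul (continuous_id.inner continuous_const))).mul continuous_const)
      · refine Filter.Eventually.of_forall (fun y => ?_)
        rw [Complex.norm_exp]
        simp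
    have lin : ∀ v : Fin 2 → ℝ, 𝓕 (fun y : E2 => ((∑ i, S y i * v i : ℝ):ℂ)) w
        = (v 0 : ℂ) * 𝓕 (gc S 0) w + (v 1 : ℂ) * 𝓕 (gc S 1) w := by
      intro v
      simp only [Real.fourier_eq', smul_eq_mul]
      rw [← integral_const_mul, ← integral_const_mul,
        ← integral_add ((hbaseInt 0).const_mul _) ((hbaseInt 1).const_mul _)]
      congr 1
      funext y
      rw [Fin.sum_univ_two]
      unfold gc
      push_cast
      ring
    rw [lin] at e1 e2
    have hperp0 : (perp xhat 0 : ℝ) = -(xhat 1) := by simp [perp]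
    have hperp1 : (perp xhat 1 : ℝ) = xhat 0 := by simp [perp]
    rw [hperp0, hperp1] at e2
    push_cast at e1 e2
    have hnorm2 : ((xhat 0 : ℝ):ℂ)^2 + ((xhat 1 : ℝ):ℂ)^2 = 1 := by
      have h2 : (xhat 0)^2 + (xhat 1)^2 = 1 := by
        have h := congrArg (fun t : ℝ => t^2) hxnorm
        simp only [one_pow] at h
        rw [← h, EuclideanSpace.norm_eq, Real.sq_sqrt (by positivity)]
        simp [Fin.sum_univ_two, sq_abs]
      have h3 := congrArg (fun t : ℝ => (t : ℂ)) h2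
      push_cast at h3
      exact h3
    intro j
    fin_cases j
    · show 𝓕 (gc S 0) w = 0
      linear_combination ((xhat 0 : ℝ):ℂ) * e1 - ((xhat 1 : ℝ):ℂ) * e2
        - (𝓕 (gc S 0) w) * hnorm2
    · show 𝓕 (gc S 1) w = 0
      linear_combination ((xhat 1 : ℝ):ℂ) * e1 + ((xhat 0 : ℝ):ℂ) * e2
        - (𝓕 (gc S 1) w) * hnorm2
  -- Step C
  have contF : ∀ j : Fin 2, Continuous (fun w : E2 => 𝓕 (gc S j) w) := fun j =>
    VectorFourier.fourierIntegral_continuous Real.continuous_fourierChar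
      (by exact continuous_inner) (hSj j)
  have stepC : ∀ j : Fin 2, ∀ w : E2, 𝓕 (gc S j) w = 0 := by
    intro j w
    rcases eq_or_ne w 0 with h | h
    · subst h
      have hdense : Dense ({(0:E2)}ᶜ) := dense_compl_singleton _
      have heq : (fun w : E2 => 𝓕 (gc S j) w) = fun _ => (0:ℂ) :=
        Continuous.ext_on hdense (contF j) continuous_const
          (fun w hw => stepB w (Set.mem_compl_singleton_iff.1 hw) j)
      exact congrFun heq 0
    · exact stepB w h j
  have hae : ∀ j : Fin 2, ∀ᵐ y : E2, S y j = 0 := by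
    intro j
    have := ae_zero_of_fourier_zero (gc S j) (hSj j) (stepC j)
    filter_upwards [this] with y hy
    exact_mod_cast show ((S y j : ℝ):ℂ) = 0 from hy
  filter_upwards [hae 0, hae 1] with y h0 h1
  funext i
  fin_cases i <;> simpa

end ElasticUniq2D

end
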